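/- Let k ∈ (0,2π) with k ≠ π. Define E(k) := 4 − 4cos(k/2) if k ∈ (0,π) and E(k) := 4 + 4cos(k/2) if k ∈ (π,2π), and define f_k(λ) := (λ−4)(cos k − 1) − sin k·√(λ(8−λ)) for k ∈ (0,π), and f_k(λ) := (λ−4)(cos k − 1) + sin k·√(λ(8−λ)) for k ∈ (π,2π). Then f_k is strictly decreasing on [0, E(k)], f_k(0) = 4(1 − cos k) > 0 and f_k(E(k)) = 0; in particular f_k(λ) > 0 for all λ ∈ [0, E(k)). -/
import Mathlib


noncomputable section

/-- E(k) := 4 − 4cos(k/2) for k ∈ (0,π), and 4 + 4cos(k/2) for k ∈ (π,2π). -/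
def EWvN (k : ℝ) : ℝ :=
  if k < Real.pi then 4 - 4 * Real.cos (k / 2) else 4 + 4 * Real.cos (k / 2)

/-- f_k(λ) := (λ−4)(cos k − 1) ∓ sin k·√(λ(8−λ)), with − for k ∈ (0,π) and + for k ∈ (π,2π). -/
def fWvN (k lam : ℝ) : ℝ :=
  if k < Real.pi then (lam - 4) * (Real.cos k - 1) - Real.sin k * Real.sqrt (lam * (8 - lam))
  else (lam - 4) * (Real.cos k - 1) + Real.sin k * Real.sqrt (lam * (8 - lam))

lemma key_fWvN (s c : ℝ) (hs : 0 < s) (hc : 0 < c) (hpyth : s ^ 2 + c ^ 2 = 1) :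
    StrictAntiOn (fun lam => (lam - 4) * (2 * c ^ 2 - 2)
        - (2 * s * c) * Real.sqrt (lam * (8 - lam))) (Set.Icc 0 (4 - 4 * c)) ∧
    ((4 - 4 * c : ℝ) - 4) * (2 * c ^ 2 - 2)
        - (2 * s * c) * Real.sqrt ((4 - 4 * c) * (8 - (4 - 4 * c))) = 0 := by
  have hc1 : c < 1 := by nlinarith
  constructor
  · intro a ha b hb hab
    have h1 : Real.sqrt (a * (8 - a)) ≤ Real.sqrt (b * (8 - b)) := by
      apply Real.sqrt_le_sqrt
      nlinarith [ha.1, hb.2]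
    have hB : (0:ℝ) ≤ 2 * s * c := by positivity
    have h2 := mul_le_mul_of_nonneg_left h1 hB
    have hA : 2 * c ^ 2 - 2 < 0 := by nlinarith
    have h3 := mul_lt_mul_of_neg_right hab hA
    simp only
    nlinarith
  · have h2 : (4 - 4 * c) * (8 - (4 - 4 * c)) = (4 * s) ^ 2 := by nlinarith
    rw [h2, Real.sqrt_sq (by positivity)]
    nlinarith

/-- f_k is strictly decreasing on [0, E(k)], f_k(0) = 4(1 − cos k) > 0,
f_k(E(k)) = 0; in particular f_k(λ) > 0 for all λ ∈ [0, E(k)). -/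
theorem fWvN_strictAnti (k : ℝ) (hk0 : 0 < k) (hk2 : k < 2 * Real.pi) (hkpi : k ≠ Real.pi) :
    StrictAntiOn (fWvN k) (Set.Icc 0 (EWvN k)) ∧
    fWvN k 0 = 4 * (1 - Real.cos k) ∧
    0 < fWvN k 0 ∧
    fWvN k (EWvN k) = 0 ∧
    ∀ lam ∈ Set.Ico 0 (EWvN k), 0 < fWvN k lam := by
  have hpi := Real.pi_pos
  have hs : 0 < Real.sin (k / 2) :=
    Real.sin_pos_of_pos_of_lt_pi (by linarith) (by linarith)
  have hpyth := Real.sin_sq_add_cos_sq (k / 2)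
  have hck : Real.cos k = 2 * (Real.cos (k / 2)) ^ 2 - 1 := by
    have := Real.cos_two_mul (k / 2)
    rw [show 2 * (k / 2) = k by ring] at this
    linarith
  have hsk : Real.sin k = 2 * Real.sin (k / 2) * Real.cos (k / 2) := by
    have := Real.sin_two_mul (k / 2)
    rw [show 2 * (k / 2) = k by ring] at this
    linarith
  rcases lt_or_gt_of_ne hkpi with hk | hk
  · -- k < π
    have hc : 0 < Real.cos (k / 2) :=
      Real.cos_pos_of_mem_Ioo ⟨by linarith, by linarith⟩
    obtain ⟨hanti, hzero⟩ := key_fWvN _ _ hs hc hpyth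
    have hc1 : Real.cos (k / 2) < 1 := by nlinarith
    have hEeq : EWvN k = 4 - 4 * Real.cos (k / 2) := if_pos hk
    have hfeq : fWvN k = fun lam => (lam - 4) * (2 * (Real.cos (k / 2)) ^ 2 - 2)
        - (2 * Real.sin (k / 2) * Real.cos (k / 2)) * Real.sqrt (lam * (8 - lam)) := by
      funext lam
      simp only [fWvN, if_pos hk]
      rw [hck, hsk]
      ring
    have hf0 : fWvN k 0 = 4 * (1 - Real.cos k) := by
      simp only [hfeq, hck]
      rw [show (0:ℝ) * (8 - 0) = 0 by ring, Real.sqrt_zero]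
      ring
    refine ⟨?_, hf0, ?_, ?_, ?_⟩
    · rw [hfeq, hEeq]; exact hanti
    · rw [hf0, hck]; nlinarith
    · rw [hfeq, hEeq]; exact hzero
    · intro lam hlam
      rw [hEeq] at hlam
      have h1 := hanti (a := lam) ⟨hlam.1, hlam.2.le⟩ ⟨by linarith, le_refl _⟩ hlam.2
      rw [hfeq]
      simp only at h1 ⊢
      linarith
  · -- π < k
    have hc : 0 < -Real.cos (k / 2) := by
      have : Real.cos (k / 2) < 0 :=
        Real.cos_neg_of_pi_div_two_lt_of_lt (by linarith) (by linarith)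
      linarith
    have hpyth' : Real.sin (k / 2) ^ 2 + (-Real.cos (k / 2)) ^ 2 = 1 := by
      rw [neg_sq]; exact hpyth
    obtain ⟨hanti, hzero⟩ := key_fWvN _ _ hs hc hpyth'
    have hc1 : -Real.cos (k / 2) < 1 := by nlinarith
    have hEeq : EWvN k = 4 - 4 * (-Real.cos (k / 2)) := by
      rw [EWvN, if_neg (not_lt.mpr hk.le)]; ring
    have hfeq : fWvN k = fun lam => (lam - 4) * (2 * (-Real.cos (k / 2)) ^ 2 - 2)
        - (2 * Real.sin (k / 2) * (-Real.cos (k / 2))) * Real.sqrt (lam * (8 - lam)) := by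
      funext lam
      simp only [fWvN, if_neg (not_lt.mpr hk.le)]
      rw [hck, hsk]
      ring
    have hf0 : fWvN k 0 = 4 * (1 - Real.cos k) := by
      simp only [hfeq, hck]
      rw [show (0:ℝ) * (8 - 0) = 0 by ring, Real.sqrt_zero]
      ring
    refine ⟨?_, hf0, ?_, ?_, ?_⟩
    · rw [hfeq, hEeq]; exact hanti
    · rw [hf0, hck]; nlinarith
    · rw [hfeq, hEeq]; exact hzero
    · intro lam hlam
      rw [hEeq] at hlam
      have h1 := hanti (a := lam) ⟨hlam.1, hlam.2.le⟩ ⟨by linarith, le_refl _⟩ hlam.2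
      rw [hfeq]
      simp only at h1 ⊢
      linarith
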